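/- arXiv:1203.4655 — 3 statements merged into one kernel-verified Lean document; each statement's English description precedes it below -/
import Mathlib

section
/- A topological group (Hausdorff) admits a left invariant metric generating its topology if and only if it is first countable. -/
/-!
The left uniformity of a first countable group, `x ~ y` iff `x⁻¹ * y` is close to `1`, is
countably generated, hence induced by some pseudometric `ρ`. Left translations preserve `x⁻¹ * y`,
so they are uniformly equicontinuous for `ρ`, and then `d x y = ⨆ g, min (ρ (g * x) (g * y)) 1` is
a left-invariant pseudometric inducing the same uniformity; in a Hausdorff group it is a metric.
Conversely, metric spaces are first countable.
-/

open Filter Topology Uniformity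

theorem min_one_le_min_one_add_min_one {a b c : ℝ} (hb : 0 ≤ b) (hc : 0 ≤ c) (habc : a ≤ b + c) :
    min a 1 ≤ min b 1 + min c 1 := by
  simp only [min_def]
  split_ifs <;> linarith

namespace PseudoMetricSpace

variable (G : Type*) {X : Type*} [Group G] [MulAction G X] [PseudoMetricSpace X]

/-- Truncating at `1` keeps the supremum over the orbit finite. -/
noncomputable def supSMulDist (x y : X) : ℝ :=
  ⨆ g : G, min (dist (g • x) (g • y)) 1

variable {G}

theorem min_dist_smul_le_supSMulDist (g : G) (x y : X) :
    min (dist (g • x) (g • y)) 1 ≤ supSMulDist G x y :=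
  le_ciSup (f := fun g : G => min (dist (g • x) (g • y)) 1)
    ⟨1, Set.forall_mem_range.2 fun _ => min_le_right _ _⟩ g

theorem supSMulDist_smul (h : G) (x y : X) :
    supSMulDist G (h • x) (h • y) = supSMulDist G x y := by
  simp only [supSMulDist, smul_smul]
  exact (Equiv.mulRight h).iSup_comp (g := fun g : G => min (dist (g • x) (g • y)) 1)

variable (G X) in
noncomputable abbrev supSMul : PseudoMetricSpace X where
  dist := supSMulDist G
  dist_self x := by simp [supSMulDist]
  dist_comm x y := by simp [supSMulDist, dist_comm]
  dist_triangle x y z := ciSup_le fun g =>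
    (min_one_le_min_one_add_min_one dist_nonneg dist_nonneg (dist_triangle _ (g • y) _)).trans
      (add_le_add (min_dist_smul_le_supSMulDist g x y) (min_dist_smul_le_supSMulDist g y z))

theorem uniformSpace_supSMul (h : UniformEquicontinuous fun g : G => (g • · : X → X)) :
    (supSMul G X).toUniformSpace = ‹PseudoMetricSpace X›.toUniformSpace := by
  refine UniformSpace.ext <| (@Metric.uniformity_basis_dist X (supSMul G X)).ext
    Metric.uniformity_basis_dist (fun ε hε => ?_)
    (fun ε hε => ⟨min ε 1, lt_min hε one_pos, fun p hp => ?_⟩)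
  · obtain ⟨δ, hδ, hδε⟩ := Metric.uniformEquicontinuous_iff.1 h (ε / 2) (half_pos hε)
    refine ⟨δ, hδ, fun p hp => ?_⟩
    calc supSMulDist G p.1 p.2 ≤ ε / 2 :=
          ciSup_le fun g => (min_le_left _ _).trans (hδε _ _ hp g).le
      _ < ε := half_lt_self hε
  · have hp' := (min_dist_smul_le_supSMulDist (1 : G) p.1 p.2).trans_lt hp
    rw [one_smul, one_smul] at hp'
    exact lt_of_not_ge fun hεp => hp'.not_ge (min_le_min_right 1 hεp)

end PseudoMetricSpace

theorem UniformSpace.exists_pseudoMetricSpace_dist_smul {G X : Type*} [Group G] [MulAction G X]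
    [UniformSpace X] [IsCountablyGenerated (𝓤 X)]
    (h : UniformEquicontinuous fun g : G => (g • · : X → X)) :
    ∃ m : PseudoMetricSpace X, m.toUniformSpace = ‹UniformSpace X› ∧
      ∀ (g : G) (x y : X), m.toDist.dist (g • x) (g • y) = m.toDist.dist x y := by
  let := UniformSpace.pseudoMetricSpace X
  exact ⟨PseudoMetricSpace.supSMul G X, PseudoMetricSpace.uniformSpace_supSMul h,
    PseudoMetricSpace.supSMulDist_smul⟩

namespace IsLeftUniformGroup

variable {G : Type*} [Group G] [UniformSpace G] [IsLeftUniformGroup G]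

theorem uniformEquicontinuous_mul_left : UniformEquicontinuous fun g : G => (g * ·) := by
  intro U hU
  rw [uniformity_eq_comap_inv_mul_nhds_one] at hU ⊢
  obtain ⟨V, hV, hVU⟩ := mem_comap.1 hU
  filter_upwards [preimage_mem_comap hV] with p hp g
  exact hVU (by simpa [mul_assoc] using hp)

instance isCountablyGenerated_uniformity [FirstCountableTopology G] :
    IsCountablyGenerated (𝓤 G) := by
  rw [uniformity_eq_comap_inv_mul_nhds_one]
  infer_instance

end IsLeftUniformGroup

/-- Birkhoff–Kakutani: a (Hausdorff) topological group admits a left invariant metric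
generating its topology if and only if it is first countable. -/
theorem birkhoff_kakutani {G : Type*} [Group G] [TopologicalSpace G]
    [IsTopologicalGroup G] [T2Space G] :
    (∃ m : MetricSpace G,
      m.toUniformSpace.toTopologicalSpace = ‹TopologicalSpace G› ∧
      ∀ g x y : G, m.toPseudoMetricSpace.toDist.dist (g * x) (g * y)
        = m.toPseudoMetricSpace.toDist.dist x y) ↔
    FirstCountableTopology G := by
  constructor
  · rintro ⟨m, hm, -⟩
    rw [← hm]
    infer_instance
  · intro
    let := IsTopologicalGroup.leftUniformSpace G
    have : IsLeftUniformGroup G := ⟨rfl⟩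
    obtain ⟨m, hm, hinv⟩ := UniformSpace.exists_pseudoMetricSpace_dist_smul
      (IsLeftUniformGroup.uniformEquicontinuous_mul_left (G := G))
    have htop : m.toUniformSpace.toTopologicalSpace = ‹TopologicalSpace G› :=
      congrArg (@UniformSpace.toTopologicalSpace G) hm
    have : @T0Space G m.toUniformSpace.toTopologicalSpace := htop ▸ inferInstance
    exact ⟨@MetricSpace.ofT0PseudoMetricSpace G m _, htop, hinv⟩
end

section
/- Fix 0 < a < 2 and let ρ: (0,1] → ℝ be a smooth function with ρ(r) = r^{−a} near r = 0. Then there exist a constant 0 < δ < a and sequences s_k > s_k' > 0 converging to 0 such that ρ(s_k) ≡ 0 (mod 2π), ρ(s_k') ≡ π (mod 2π), and s_k − s_k' < s_k^{1+δ}. -/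
open Filter

set_option maxHeartbeats 1000000

/-- For `0 < a < 2` and a smooth `ρ : (0,1] → ℝ` with `ρ(r) = r^{−a}` near `0`, there are
`0 < δ < a` and sequences `s_k > s_k' > 0` tending to `0` with `ρ(s_k) ≡ 0 (mod 2π)`,
`ρ(s_k') ≡ π (mod 2π)` and `s_k − s_k' < s_k^{1+δ}`. -/
theorem angle_sequences_exist
    (a : ℝ) (ha : 0 < a) (ha2 : a < 2)
    (ρ : ℝ → ℝ) (hρsm : ContDiffOn ℝ (⊤ : ℕ∞) ρ (Set.Ioc 0 1))
    (hρ : ∃ ε > 0, ∀ r ∈ Set.Ioc (0 : ℝ) ε, ρ r = r ^ (-a)) :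
    ∃ δ : ℝ, 0 < δ ∧ δ < a ∧ ∃ s s' : ℕ → ℝ,
      (∀ k, 0 < s' k) ∧ (∀ k, s' k < s k) ∧
      Tendsto s atTop (nhds 0) ∧ Tendsto s' atTop (nhds 0) ∧
      (∀ k, ∃ m : ℤ, ρ (s k) = 2 * Real.pi * m) ∧
      (∀ k, ∃ m : ℤ, ρ (s' k) = Real.pi + 2 * Real.pi * m) ∧
      (∀ k, s k - s' k < s k ^ (1 + δ)) := by
  obtain ⟨ε, hε, hρε⟩ := hρ
  set δ : ℝ := a / 2 with hδdef
  have hδ : 0 < δ := by positivity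
  have hδ1 : δ < 1 := by simp only [hδdef]; linarith
  have hπ := Real.pi_gt_three
  have hπpos := Real.pi_pos
  -- choose N
  obtain ⟨N, hN⟩ := exists_nat_gt (max (ε ^ (-a)) ((Real.pi / δ) ^ (2:ℝ)))
  set t : ℕ → ℝ := fun k => 2 * Real.pi * (N + 1 + k) with htdef
  have htpos : ∀ k, 0 < t k := by
    intro k; simp only [htdef]; positivity
  have htgt : ∀ k, max (ε ^ (-a)) ((Real.pi / δ) ^ (2:ℝ)) < t k := by
    intro k
    have h1 : (N : ℝ) < N + 1 + k := by push_cast; linarith [Nat.cast_nonneg (α := ℝ) k]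
    have h2 : (N : ℝ) + 1 + k ≤ 2 * Real.pi * (N + 1 + k) := by
      nlinarith [Nat.cast_nonneg (α := ℝ) k, Nat.cast_nonneg (α := ℝ) N]
    calc max (ε ^ (-a)) ((Real.pi / δ) ^ (2:ℝ)) < N := hN
      _ < t k := by simp only [htdef]; linarith
  refine ⟨δ, hδ, by simp only [hδdef]; linarith,
    fun k => t k ^ (-(1/a)), fun k => (t k + Real.pi) ^ (-(1/a)), ?_, ?_, ?_, ?_, ?_, ?_, ?_⟩
  · intro k; exact Real.rpow_pos_of_pos (by linarith [htpos k]) _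
  · intro k
    exact Real.rpow_lt_rpow_of_neg (htpos k) (by linarith) (by simp; positivity)
  · have hT : Tendsto t atTop atTop :=
      (tendsto_atTop_add_const_left atTop ((N:ℝ)+1)
        tendsto_natCast_atTop_atTop).const_mul_atTop
        (by positivity : (0:ℝ) < 2 * Real.pi)
    exact (tendsto_rpow_neg_atTop (by positivity : (0:ℝ) < 1/a)).comp hT
  · have hT : Tendsto (fun k => t k + Real.pi) atTop atTop :=
      tendsto_atTop_add_const_right _ _
        ((tendsto_atTop_add_const_left atTop ((N:ℝ)+1)
          tendsto_natCast_atTop_atTop).const_mul_atTop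
          (by positivity : (0:ℝ) < 2 * Real.pi))
    exact (tendsto_rpow_neg_atTop (by positivity : (0:ℝ) < 1/a)).comp hT
  · intro k
    refine ⟨(N : ℤ) + 1 + k, ?_⟩
    have hle : t k ^ (-(1/a)) ∈ Set.Ioc (0:ℝ) ε := by
      constructor
      · exact Real.rpow_pos_of_pos (htpos k) _
      · have h1 : ε ^ (-a) < t k := lt_of_le_of_lt (le_max_left _ _) (htgt k)
        have h2 : t k ^ (-(1/a)) < (ε ^ (-a)) ^ (-(1/a)) :=
          Real.rpow_lt_rpow_of_neg (Real.rpow_pos_of_pos hε _) h1 (by simp; positivity)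
        have h3 : (ε ^ (-a)) ^ (-(1/a)) = ε := by
          rw [← Real.rpow_mul hε.le]
          rw [show (-a) * (-(1/a)) = 1 by field_simp, Real.rpow_one]
        linarith
    rw [hρε _ hle, ← Real.rpow_mul (htpos k).le,
      show (-(1/a)) * (-a) = 1 by field_simp, Real.rpow_one]
    simp only [htdef]; push_cast; ring
  · intro k
    refine ⟨(N : ℤ) + 1 + k, ?_⟩
    have hlt : (t k + Real.pi) ^ (-(1/a)) < t k ^ (-(1/a)) :=
      Real.rpow_lt_rpow_of_neg (htpos k) (by linarith) (by simp; positivity)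
    have hle : (t k + Real.pi) ^ (-(1/a)) ∈ Set.Ioc (0:ℝ) ε := by
      constructor
      · exact Real.rpow_pos_of_pos (by linarith [htpos k]) _
      · have h1 : ε ^ (-a) < t k := lt_of_le_of_lt (le_max_left _ _) (htgt k)
        have h2 : (t k + Real.pi) ^ (-(1/a)) < (ε ^ (-a)) ^ (-(1/a)) :=
          Real.rpow_lt_rpow_of_neg (Real.rpow_pos_of_pos hε _) (by linarith) (by simp; positivity)
        have h3 : (ε ^ (-a)) ^ (-(1/a)) = ε := by
          rw [← Real.rpow_mul hε.le]
          rw [show (-a) * (-(1/a)) = 1 by field_simp, Real.rpow_one]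
        linarith
    rw [hρε _ hle, ← Real.rpow_mul (by linarith [htpos k] : (0:ℝ) ≤ t k + Real.pi),
      show (-(1/a)) * (-a) = 1 by field_simp, Real.rpow_one]
    simp only [htdef]; push_cast; ring
  · intro k
    set s : ℝ := t k ^ (-(1/a)) with hsdef
    set s' : ℝ := (t k + Real.pi) ^ (-(1/a)) with hs'def
    have hspos : 0 < s := Real.rpow_pos_of_pos (htpos k) _
    set x : ℝ := t k ^ (-(1/2) : ℝ) with hxdef
    have hxpos : 0 < x := Real.rpow_pos_of_pos (htpos k) _
    have hsx : s ^ δ = x := by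
      rw [hsdef, hxdef, ← Real.rpow_mul (htpos k).le]
      congr 1
      simp only [hδdef]; field_simp
    -- x < δ / π
    have hπδ : (Real.pi / δ) ^ (2:ℝ) < t k := lt_of_le_of_lt (le_max_right _ _) (htgt k)
    have hxδ : x < δ / Real.pi := by
      have h2 : t k ^ (-(1/2):ℝ) < ((Real.pi / δ) ^ (2:ℝ)) ^ (-(1/2):ℝ) :=
        Real.rpow_lt_rpow_of_neg (Real.rpow_pos_of_pos (by positivity) _) hπδ (by norm_num)
      have h3 : ((Real.pi / δ) ^ (2:ℝ)) ^ (-(1/2):ℝ) = δ / Real.pi := by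
        rw [← Real.rpow_mul (by positivity)]
        norm_num
        rw [Real.rpow_neg_one]; exact inv_div _ _
      rw [hxdef]; linarith
    have hx1 : x < 1 := by
      have : δ / Real.pi < 1 := by
        rw [div_lt_one hπpos]; linarith
      linarith
    -- key: (1-x)^a ≤ 1 - δ*x
    have hbern : (1 - x) ^ a ≤ 1 - δ * x := by
      have h1 : (1 - x) ^ a ≤ (1 - x) ^ δ := by
        apply Real.rpow_le_rpow_of_exponent_ge (by linarith) (by linarith)
        simp only [hδdef]; linarith
      have h2 : (1 - x) ^ δ ≤ 1 - δ * x := by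
        have h := rpow_one_add_le_one_add_mul_self (s := -x) (by linarith) hδ.le hδ1.le
        rw [show (1:ℝ) + -x = 1 - x by ring] at h
        linarith
      linarith
    -- π < δ * x * t k
    have hxt : x * t k = t k ^ ((1:ℝ)/2) := by
      nth_rewrite 1 [show t k = t k ^ (1:ℝ) by rw [Real.rpow_one]]
      rw [hxdef, ← Real.rpow_add (htpos k)]
      norm_num
    have hsqrt : Real.pi / δ < t k ^ ((1:ℝ)/2) := by
      have h2 : ((Real.pi / δ) ^ (2:ℝ)) ^ ((1:ℝ)/2) < t k ^ ((1:ℝ)/2) :=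
        Real.rpow_lt_rpow (by positivity) hπδ (by norm_num)
      have h3 : ((Real.pi / δ) ^ (2:ℝ)) ^ ((1:ℝ)/2) = Real.pi / δ := by
        rw [← Real.rpow_mul (by positivity)]
        norm_num
      linarith
    have hπlt : Real.pi < δ * (x * t k) := by
      rw [hxt]
      calc Real.pi = δ * (Real.pi / δ) := by field_simp
        _ < δ * t k ^ ((1:ℝ)/2) := by
          exact mul_lt_mul_of_pos_left hsqrt hδ
    -- (t+π)(1-x)^a < t
    have hmain : (t k + Real.pi) * (1 - x) ^ a < t k := by
      have h1 : (t k + Real.pi) * (1 - x) ^ a ≤ (t k + Real.pi) * (1 - δ * x) :=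
        mul_le_mul_of_nonneg_left hbern (by linarith [htpos k])
      have h2 : (t k + Real.pi) * (1 - δ * x) < t k := by
        have hδxπ : 0 < δ * x * Real.pi := by positivity
        nlinarith
      linarith
    -- t + π < t * (1-x)^(-a)
    have h1x : (0:ℝ) < 1 - x := by linarith
    have hB : t k + Real.pi < t k * (1 - x) ^ (-a) := by
      rw [Real.rpow_neg h1x.le, ← div_eq_mul_inv]
      rw [lt_div_iff₀ (Real.rpow_pos_of_pos h1x a)]
      exact hmain
    have hkey : (t k * (1 - x) ^ (-a)) ^ (-(1/a)) < s' := by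
      rw [hs'def]
      exact Real.rpow_lt_rpow_of_neg (by linarith [htpos k]) hB (by simp; positivity)
    have hLHS : (t k * (1 - x) ^ (-a)) ^ (-(1/a)) = s * (1 - x) := by
      rw [Real.mul_rpow (htpos k).le (Real.rpow_pos_of_pos h1x _).le, ← hsdef,
        ← Real.rpow_mul h1x.le, show (-a) * (-(1/a)) = 1 by field_simp, Real.rpow_one]
    have hfin : s * (1 - x) < s' := by rw [← hLHS]; exact hkey
    have hpow : s ^ (1 + δ) = s * (s ^ δ) := by
      rw [Real.rpow_add hspos, Real.rpow_one]
    rw [hpow, hsx]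
    nlinarith
end

section
/- Fix 0 < a < 2 and ρ: (0,1] → ℝ smooth with ρ(r) = r^{−a} near 0 and ρ ≥ 0, vanishing near r = 1. Define φ on a neighborhood of the origin in ℝ³ with polar coordinates (r, θ, z) by φ(r, θ, z) = (r, θ − ρ(r), z + r²ρ(r)/2 + ∫_r^1 s ρ(s) ds) for r > 0 and φ(0,0,z) = (0, 0, z + ∫_{0^+}^1 s ρ(s) ds). Then φ extends continuously to r = 0 (since ∫_{0^+}^1 s ρ(s) ds < ∞), φ is injective, but φ is not Lipschitz continuous in any neighborhood of the origin. -/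
open MeasureTheory

/-- The map `φ(r,θ,z) = (r, θ − ρ(r), z + r²ρ(r)/2 + ∫_r^1 s ρ(s) ds)` written in
Cartesian coordinates on `ℝ² × ℝ` (rotation of the plane factor by the angle `−ρ(r)`). -/
noncomputable def phiMap (ρ : ℝ → ℝ) (p : (ℝ × ℝ) × ℝ) : (ℝ × ℝ) × ℝ :=
  let r := Real.sqrt (p.1.1 ^ 2 + p.1.2 ^ 2)
  ((Real.cos (ρ r) * p.1.1 + Real.sin (ρ r) * p.1.2,
    -Real.sin (ρ r) * p.1.1 + Real.cos (ρ r) * p.1.2),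
    p.2 + r ^ 2 * ρ r / 2 + ∫ s in r..1, s * ρ s)

private lemma aux_rm_cont : Continuous (fun p : (ℝ × ℝ) × ℝ => Real.sqrt (p.1.1 ^ 2 + p.1.2 ^ 2)) := by
  fun_prop

private lemma aux_rm_lt_one {p : (ℝ × ℝ) × ℝ} (hp : p.1.1 ^ 2 + p.1.2 ^ 2 < 1) :
    Real.sqrt (p.1.1 ^ 2 + p.1.2 ^ 2) < 1 := by
  rw [show (1:ℝ) = Real.sqrt 1 by simp]
  exact Real.sqrt_lt_sqrt (by positivity) (by simpa using hp)

private lemma aux_mul_cont (ρ : ℝ → ℝ) (hρc : ContinuousOn ρ (Set.Ioc 0 1))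
    (f : ℝ → ℝ) (hf : Continuous f) (hfb : ∀ t, |f t| ≤ 1)
    (c : (ℝ × ℝ) × ℝ → ℝ) (hc : Continuous c)
    (hcb : ∀ p : (ℝ × ℝ) × ℝ, |c p| ≤ Real.sqrt (p.1.1 ^ 2 + p.1.2 ^ 2)) :
    ContinuousOn (fun p : (ℝ × ℝ) × ℝ => f (ρ (Real.sqrt (p.1.1 ^ 2 + p.1.2 ^ 2))) * c p)
      {p : (ℝ × ℝ) × ℝ | p.1.1 ^ 2 + p.1.2 ^ 2 < 1} := by
  intro p hp
  have h0 : 0 ≤ Real.sqrt (p.1.1 ^ 2 + p.1.2 ^ 2) := Real.sqrt_nonneg _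
  have h1 : Real.sqrt (p.1.1 ^ 2 + p.1.2 ^ 2) < 1 := aux_rm_lt_one hp
  rcases eq_or_lt_of_le h0 with h | h
  · -- boundary case r = 0: squeeze
    have hc0 : c p = 0 := by
      have h2 := hcb p
      rw [← h] at h2
      exact abs_nonpos_iff.mp h2
    have hval : f (ρ (Real.sqrt (p.1.1 ^ 2 + p.1.2 ^ 2))) * c p = 0 := by rw [hc0, mul_zero]
    show Filter.Tendsto _ _ _
    simp only [hval]
    apply squeeze_zero_norm
      (a := fun q : (ℝ × ℝ) × ℝ => Real.sqrt (q.1.1 ^ 2 + q.1.2 ^ 2))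
    · intro q
      rw [Real.norm_eq_abs, abs_mul]
      calc |f (ρ (Real.sqrt (q.1.1 ^ 2 + q.1.2 ^ 2)))| * |c q|
          ≤ 1 * Real.sqrt (q.1.1 ^ 2 + q.1.2 ^ 2) :=
            mul_le_mul (hfb _) (hcb q) (abs_nonneg _) zero_le_one
        _ = Real.sqrt (q.1.1 ^ 2 + q.1.2 ^ 2) := one_mul _
    · show Filter.Tendsto _ (nhdsWithin p {p : (ℝ × ℝ) × ℝ | p.1.1 ^ 2 + p.1.2 ^ 2 < 1}) (nhds 0)
      rw [h]
      exact (aux_rm_cont.tendsto p).mono_left nhdsWithin_le_nhds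
  · -- interior case r > 0
    have hmem : Set.Ioo (0:ℝ) 1 ∈ nhds (Real.sqrt (p.1.1 ^ 2 + p.1.2 ^ 2)) :=
      isOpen_Ioo.mem_nhds ⟨h, h1⟩
    have hρat : ContinuousAt ρ (Real.sqrt (p.1.1 ^ 2 + p.1.2 ^ 2)) :=
      (hρc.mono Set.Ioo_subset_Ioc_self).continuousAt hmem
    have hin : ContinuousAt (fun q : (ℝ × ℝ) × ℝ => ρ (Real.sqrt (q.1.1 ^ 2 + q.1.2 ^ 2))) p :=
      Filter.Tendsto.comp hρat aux_rm_cont.continuousAt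
    have hout : ContinuousAt (fun q : (ℝ × ℝ) × ℝ => f (ρ (Real.sqrt (q.1.1 ^ 2 + q.1.2 ^ 2)))) p :=
      hf.continuousAt.comp hin
    exact (hout.mul hc.continuousAt).continuousWithinAt

private lemma aux_sq_cont (a : ℝ) (ha : 0 < a) (ha2 : a < 2) (ρ : ℝ → ℝ)
    (hρc : ContinuousOn ρ (Set.Ioc 0 1))
    (ε : ℝ) (hε : ε ∈ Set.Ioc (0:ℝ) 1) (hρε : ∀ r ∈ Set.Ioc (0:ℝ) ε, ρ r = r ^ (-a)) :
    ContinuousOn (fun p : (ℝ × ℝ) × ℝ =>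
      Real.sqrt (p.1.1 ^ 2 + p.1.2 ^ 2) ^ 2 * ρ (Real.sqrt (p.1.1 ^ 2 + p.1.2 ^ 2)) / 2)
      {p : (ℝ × ℝ) × ℝ | p.1.1 ^ 2 + p.1.2 ^ 2 < 1} := by
  intro p hp
  have h0 : 0 ≤ Real.sqrt (p.1.1 ^ 2 + p.1.2 ^ 2) := Real.sqrt_nonneg _
  have h1 : Real.sqrt (p.1.1 ^ 2 + p.1.2 ^ 2) < 1 := aux_rm_lt_one hp
  have h2a : (0:ℝ) < 2 - a := by linarith
  rcases eq_or_lt_of_le h0 with h | h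
  · have htend : Filter.Tendsto (fun q : (ℝ × ℝ) × ℝ => Real.sqrt (q.1.1 ^ 2 + q.1.2 ^ 2))
        (nhdsWithin p {p : (ℝ × ℝ) × ℝ | p.1.1 ^ 2 + p.1.2 ^ 2 < 1}) (nhds 0) := by
      rw [h]
      exact (aux_rm_cont.tendsto p).mono_left nhdsWithin_le_nhds
    have hval : Real.sqrt (p.1.1 ^ 2 + p.1.2 ^ 2) ^ 2 * ρ (Real.sqrt (p.1.1 ^ 2 + p.1.2 ^ 2)) / 2
        = 0 := by rw [← h]; ring
    show Filter.Tendsto _ _ _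
    simp only [hval]
    apply squeeze_zero_norm'
      (a := fun q : (ℝ × ℝ) × ℝ => Real.sqrt (q.1.1 ^ 2 + q.1.2 ^ 2) ^ (2 - a))
    · filter_upwards [htend (Iio_mem_nhds hε.1)] with q hq
      set r := Real.sqrt (q.1.1 ^ 2 + q.1.2 ^ 2) with hr
      have hr0 : 0 ≤ r := Real.sqrt_nonneg _
      rcases eq_or_lt_of_le hr0 with h' | h'
      · rw [← h', Real.zero_rpow h2a.ne']
        norm_num
      · have hρq : ρ r = r ^ (-a) := hρε r ⟨h', le_of_lt hq⟩
        rw [hρq, Real.norm_eq_abs, abs_of_nonneg (by positivity)]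
        have he : r ^ 2 * r ^ (-a) = r ^ (2 - a) := by
          rw [show (r:ℝ) ^ 2 = r ^ ((2:ℕ):ℝ) from (Real.rpow_natCast r 2).symm,
            ← Real.rpow_add h']
          norm_num [sub_eq_add_neg]
        rw [he]
        have := Real.rpow_nonneg hr0 (2 - a)
        linarith
    · have hc := (Real.continuousAt_rpow_const 0 (2 - a) (Or.inr h2a.le)).tendsto.comp htend
      simpa [Real.zero_rpow h2a.ne', Function.comp_def] using hc
  · have hmem : Set.Ioo (0:ℝ) 1 ∈ nhds (Real.sqrt (p.1.1 ^ 2 + p.1.2 ^ 2)) :=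
      isOpen_Ioo.mem_nhds ⟨h, h1⟩
    have hρat : ContinuousAt ρ (Real.sqrt (p.1.1 ^ 2 + p.1.2 ^ 2)) :=
      (hρc.mono Set.Ioo_subset_Ioc_self).continuousAt hmem
    have hin : ContinuousAt (fun q : (ℝ × ℝ) × ℝ => ρ (Real.sqrt (q.1.1 ^ 2 + q.1.2 ^ 2))) p :=
      Filter.Tendsto.comp hρat aux_rm_cont.continuousAt
    exact (((aux_rm_cont.continuousAt.pow 2).mul hin).div_const 2).continuousWithinAt

/-- For `0 < a < 2` and `ρ` smooth on `(0,1]`, nonnegative, equal to `r^{−a}` near `0` and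
vanishing near `1`, the map `φ` extends continuously to `r = 0` and is injective on the
unit ball, but is not Lipschitz continuous on any neighborhood of the origin. -/
theorem phiMap_continuous_injective_not_lipschitz
    (a : ℝ) (ha : 0 < a) (ha2 : a < 2)
    (ρ : ℝ → ℝ)
    (hρsm : ContDiffOn ℝ (⊤ : ℕ∞) ρ (Set.Ioc 0 1))
    (hρnn : ∀ r ∈ Set.Ioc (0 : ℝ) 1, 0 ≤ ρ r)
    (hρ0 : ∃ ε ∈ Set.Ioc (0 : ℝ) 1, ∀ r ∈ Set.Ioc (0 : ℝ) ε, ρ r = r ^ (-a))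
    (hρ1 : ∃ ε > (0 : ℝ), ∀ r ∈ Set.Icc (1 - ε) (1 : ℝ), ρ r = 0)
    (hint : IntervalIntegrable (fun s => s * ρ s) volume 0 1) :
    ContinuousOn (phiMap ρ) {p : (ℝ × ℝ) × ℝ | p.1.1 ^ 2 + p.1.2 ^ 2 < 1} ∧
    Set.InjOn (phiMap ρ) {p : (ℝ × ℝ) × ℝ | p.1.1 ^ 2 + p.1.2 ^ 2 < 1} ∧
    ∀ U ∈ nhds (((0, 0), 0) : (ℝ × ℝ) × ℝ), ∀ K : NNReal,
      ¬ LipschitzOnWith K (phiMap ρ) U := by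
  obtain ⟨ε₀, hε₀, hρε⟩ := hρ0
  have hρc : ContinuousOn ρ (Set.Ioc 0 1) := hρsm.continuousOn
  refine ⟨?_, ?_, ?_⟩
  · -- Continuity
    have hx : ∀ p : (ℝ × ℝ) × ℝ, |p.1.1| ≤ Real.sqrt (p.1.1 ^ 2 + p.1.2 ^ 2) := fun p => by
      rw [← Real.sqrt_sq_eq_abs]
      exact Real.sqrt_le_sqrt (by nlinarith [sq_nonneg p.1.2])
    have hy : ∀ p : (ℝ × ℝ) × ℝ, |p.1.2| ≤ Real.sqrt (p.1.1 ^ 2 + p.1.2 ^ 2) := fun p => by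
      rw [← Real.sqrt_sq_eq_abs]
      exact Real.sqrt_le_sqrt (by nlinarith [sq_nonneg p.1.1])
    have hcx := aux_mul_cont ρ hρc Real.cos Real.continuous_cos
      (fun t => Real.abs_cos_le_one t) _ (continuous_fst.fst) hx
    have hsy := aux_mul_cont ρ hρc Real.sin Real.continuous_sin
      (fun t => Real.abs_sin_le_one t) _ (continuous_fst.snd) hy
    have hnsx := aux_mul_cont ρ hρc (fun t => -Real.sin t) Real.continuous_sin.neg
      (fun t => by rw [abs_neg]; exact Real.abs_sin_le_one t) _ (continuous_fst.fst) hx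
    have hcy := aux_mul_cont ρ hρc Real.cos Real.continuous_cos
      (fun t => Real.abs_cos_le_one t) _ (continuous_fst.snd) hy
    have hsq := aux_sq_cont a ha ha2 ρ hρc ε₀ hε₀ hρε
    have hIcc : IntegrableOn (fun s => s * ρ s) (Set.uIcc 0 1) volume :=
      (intervalIntegrable_iff').mp hint
    have hF : ContinuousOn (fun r => ∫ s in r..1, s * ρ s) (Set.uIcc (0:ℝ) 1) :=
      intervalIntegral.continuousOn_primitive_interval_left hIcc
    have hFc : ContinuousOn
        (fun p : (ℝ × ℝ) × ℝ => ∫ s in (Real.sqrt (p.1.1 ^ 2 + p.1.2 ^ 2))..1, s * ρ s)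
        {p : (ℝ × ℝ) × ℝ | p.1.1 ^ 2 + p.1.2 ^ 2 < 1} := by
      refine hF.comp aux_rm_cont.continuousOn (fun p hp => ?_)
      rw [Set.uIcc_of_le zero_le_one]
      exact ⟨Real.sqrt_nonneg _, (aux_rm_lt_one hp).le⟩
    have hz : ContinuousOn (fun p : (ℝ × ℝ) × ℝ =>
        p.2 + Real.sqrt (p.1.1 ^ 2 + p.1.2 ^ 2) ^ 2 * ρ (Real.sqrt (p.1.1 ^ 2 + p.1.2 ^ 2)) / 2
          + ∫ s in (Real.sqrt (p.1.1 ^ 2 + p.1.2 ^ 2))..1, s * ρ s)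
        {p : (ℝ × ℝ) × ℝ | p.1.1 ^ 2 + p.1.2 ^ 2 < 1} :=
      (continuous_snd.continuousOn.add hsq).add hFc
    have hfin := ((hcx.add hsy).prodMk (hnsx.add hcy)).prodMk hz
    exact hfin.congr (fun p hp => by simp only [phiMap, neg_mul, Pi.add_apply])
  · -- Injectivity
    rintro ⟨⟨px, py⟩, pz⟩ hp ⟨⟨qx, qy⟩, qz⟩ hq h
    simp only [phiMap, Prod.mk.injEq] at h
    obtain ⟨⟨h1, h2⟩, h3⟩ := h
    set rp := Real.sqrt (px ^ 2 + py ^ 2) with hrp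
    set rq := Real.sqrt (qx ^ 2 + qy ^ 2) with hrq
    have hr : rp = rq := by
      have e : px ^ 2 + py ^ 2 = qx ^ 2 + qy ^ 2 := by
        linear_combination ((Real.cos (ρ rp) * px + Real.sin (ρ rp) * py)
            + (Real.cos (ρ rq) * qx + Real.sin (ρ rq) * qy)) * h1
          + ((-Real.sin (ρ rp) * px + Real.cos (ρ rp) * py)
            + (-Real.sin (ρ rq) * qx + Real.cos (ρ rq) * qy)) * h2
          - (px ^ 2 + py ^ 2) * Real.sin_sq_add_cos_sq (ρ rp)
          + (qx ^ 2 + qy ^ 2) * Real.sin_sq_add_cos_sq (ρ rq)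
      rw [hrp, hrq, e]
    rw [← hr] at h1 h2 h3
    have hx : px = qx := by
      linear_combination Real.cos (ρ rp) * h1 - Real.sin (ρ rp) * h2
        + (qx - px) * Real.sin_sq_add_cos_sq (ρ rp)
    have hy : py = qy := by
      linear_combination Real.sin (ρ rp) * h1 + Real.cos (ρ rp) * h2
        + (qy - py) * Real.sin_sq_add_cos_sq (ρ rp)
    have hz : pz = qz := by linarith
    simp [hx, hy, hz]
  · -- Not Lipschitz
    intro U hU K hK
    obtain ⟨δ, hδ, hball⟩ := Metric.mem_nhds_iff.mp hU
    set b : ℕ → ℝ := fun k => Real.pi * (2 * k) with hb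
    set b' : ℕ → ℝ := fun k => Real.pi * (2 * k + 1) with hb'
    set r : ℕ → ℝ := fun k => b k ^ (-a⁻¹) with hrdef
    set r' : ℕ → ℝ := fun k => b' k ^ (-a⁻¹) with hr'def
    set t : ℕ → ℝ := fun k => ((2 * (k:ℝ)) / (2 * k + 1)) ^ a⁻¹ with ht
    have ha' : (0:ℝ) < a⁻¹ := by positivity
    have h2k : Filter.Tendsto (fun k : ℕ => 2 * (k:ℝ)) Filter.atTop Filter.atTop :=
      Filter.Tendsto.const_mul_atTop two_pos tendsto_natCast_atTop_atTop
    have hbtop : Filter.Tendsto b Filter.atTop Filter.atTop := by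
      rw [hb]
      exact Filter.Tendsto.const_mul_atTop Real.pi_pos h2k
    have hrtend : Filter.Tendsto r Filter.atTop (nhds 0) := by
      rw [hrdef]
      exact (tendsto_rpow_neg_atTop ha').comp hbtop
    have httend : Filter.Tendsto t Filter.atTop (nhds 1) := by
      have h2k1 : Filter.Tendsto (fun k : ℕ => 2 * (k:ℝ) + 1) Filter.atTop Filter.atTop :=
        Filter.tendsto_atTop_add_const_right _ _ h2k
      have hinv : Filter.Tendsto (fun k : ℕ => (2 * (k:ℝ) + 1)⁻¹) Filter.atTop (nhds 0) :=
        tendsto_inv_atTop_zero.comp h2k1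
      have hu : Filter.Tendsto (fun k : ℕ => (2 * (k:ℝ)) / (2 * k + 1)) Filter.atTop (nhds 1) := by
        have heq : ∀ k : ℕ, (2 * (k:ℝ)) / (2 * k + 1) = 1 - (2 * (k:ℝ) + 1)⁻¹ := by
          intro k
          have hk : (2 * (k:ℝ) + 1) ≠ 0 := by positivity
          field_simp
          ring
        simp only [heq]
        have hone : Filter.Tendsto (fun _ : ℕ => (1:ℝ)) Filter.atTop (nhds 1) :=
          tendsto_const_nhds
        simpa using hone.sub hinv
      have hc := (Real.continuousAt_rpow_const 1 a⁻¹ (Or.inl one_ne_zero)).tendsto.comp hu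
      rw [ht]
      simpa [Real.one_rpow, Function.comp_def] using hc
    have hKpos : (0:ℝ) < 2 * ((K:ℝ) + 1) := by positivity
    have hev1 : ∀ᶠ k in Filter.atTop, r k < min δ ε₀ :=
      hrtend.eventually (eventually_lt_nhds (lt_min hδ hε₀.1))
    have hev2 : ∀ᶠ k in Filter.atTop, 1 - (2 * ((K:ℝ) + 1))⁻¹ < t k :=
      httend.eventually (eventually_gt_nhds (by
        have : 0 < (2 * ((K:ℝ) + 1))⁻¹ := by positivity
        linarith))
    obtain ⟨k, hk1, hkr, hkt⟩ := ((Filter.eventually_ge_atTop 1).and (hev1.and hev2)).exists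
    have hk0 : (0:ℝ) < (k:ℝ) := by exact_mod_cast hk1
    have hbk : 0 < b k := by rw [hb]; positivity
    have hb'k : 0 < b' k := by rw [hb']; positivity
    have hbb' : b k < b' k := by
      rw [hb, hb']
      have : (2 * (k:ℝ)) < 2 * k + 1 := by linarith
      exact mul_lt_mul_of_pos_left this Real.pi_pos
    have hrk : 0 < r k := Real.rpow_pos_of_pos hbk _
    have hr'k : 0 < r' k := Real.rpow_pos_of_pos hb'k _
    have hlt : r' k < r k := Real.rpow_lt_rpow_of_neg hbk hbb' (by linarith)
    have hrkε : r k ≤ ε₀ := le_of_lt (lt_of_lt_of_le hkr (min_le_right _ _))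
    have hrkδ : r k < δ := lt_of_lt_of_le hkr (min_le_left _ _)
    have hρrk : ρ (r k) = b k := by
      rw [hρε _ ⟨hrk, hrkε⟩, hrdef]
      rw [← Real.rpow_mul hbk.le]
      rw [show (-a⁻¹) * (-a) = a⁻¹ * a by ring, inv_mul_cancel₀ ha.ne', Real.rpow_one]
    have hρr'k : ρ (r' k) = b' k := by
      rw [hρε _ ⟨hr'k, le_of_lt (lt_of_lt_of_le hlt hrkε)⟩, hr'def]
      rw [← Real.rpow_mul hb'k.le]
      rw [show (-a⁻¹) * (-a) = a⁻¹ * a by ring, inv_mul_cancel₀ ha.ne', Real.rpow_one]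
    have hcos : Real.cos (b k) = 1 := by
      rw [show b k = (k:ℝ) * (2 * Real.pi) by rw [hb]; push_cast; ring]
      exact Real.cos_nat_mul_two_pi k
    have hcos' : Real.cos (b' k) = -1 := by
      rw [show b' k = (k:ℝ) * (2 * Real.pi) + Real.pi by rw [hb']; push_cast; ring]
      exact Real.cos_nat_mul_two_pi_add_pi k
    -- the two test points
    set p : (ℝ × ℝ) × ℝ := ((r k, 0), 0) with hpdef
    set q : (ℝ × ℝ) × ℝ := ((r' k, 0), 0) with hqdef
    have hsqp : Real.sqrt (r k ^ 2 + 0 ^ 2) = r k := by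
      rw [show r k ^ 2 + 0 ^ 2 = r k ^ 2 by ring, Real.sqrt_sq hrk.le]
    have hsqq : Real.sqrt (r' k ^ 2 + 0 ^ 2) = r' k := by
      rw [show r' k ^ 2 + 0 ^ 2 = r' k ^ 2 by ring, Real.sqrt_sq hr'k.le]
    have hpU : p ∈ U := by
      apply hball
      simp only [Metric.mem_ball, hpdef, Prod.dist_eq, Real.dist_eq]
      simp [abs_of_pos hrk, abs_of_pos hδ, hrkδ, max_lt_iff, hδ]
    have hqU : q ∈ U := by
      apply hball
      simp only [Metric.mem_ball, hqdef, Prod.dist_eq, Real.dist_eq]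
      simp [abs_of_pos hr'k, max_lt_iff, hδ]
      linarith
    have e1 : (phiMap ρ p).1.1 = r k := by
      simp only [phiMap, hpdef, hsqp, hρrk, hcos]
      ring
    have e2 : (phiMap ρ q).1.1 = -(r' k) := by
      simp only [phiMap, hqdef, hsqq, hρr'k, hcos']
      ring
    have hge : r k + r' k ≤ dist (phiMap ρ p) (phiMap ρ q) := by
      calc r k + r' k = |(phiMap ρ p).1.1 - (phiMap ρ q).1.1| := by
            rw [e1, e2, sub_neg_eq_add, abs_of_pos (by linarith)]
        _ = dist (phiMap ρ p).1.1 (phiMap ρ q).1.1 := (Real.dist_eq _ _).symm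
        _ ≤ dist (phiMap ρ p).1 (phiMap ρ q).1 := by
            rw [Prod.dist_eq]; exact le_max_left _ _
        _ ≤ dist (phiMap ρ p) (phiMap ρ q) := by
            rw [Prod.dist_eq]; exact le_max_left _ _
    have hdpq : dist p q = r k - r' k := by
      rw [hpdef, hqdef]
      simp only [Prod.dist_eq, Real.dist_eq]
      rw [abs_of_pos (by linarith : (0:ℝ) < r k - r' k)]
      simp [max_eq_left, sub_nonneg, hlt.le]
    have hd := hK.dist_le_mul p hpU q hqU
    rw [hdpq] at hd
    have hkey : r k + r' k ≤ (K:ℝ) * (r k - r' k) := le_trans hge hd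
    -- r' k = r k * t k
    have hrt : r' k = r k * t k := by
      have hπ : Real.pi ≠ 0 := Real.pi_ne_zero
      have hq2 : ((2 * (k:ℝ)) / (2 * k + 1)) = b k / b' k := by
        rw [hb, hb', mul_div_mul_left _ _ hπ]
      rw [ht]
      simp only [hq2]
      rw [Real.div_rpow hbk.le hb'k.le]
      simp only [hrdef, hr'def]
      rw [Real.rpow_neg hbk.le, Real.rpow_neg hb'k.le]
      have hn1 : b k ^ a⁻¹ ≠ 0 := (Real.rpow_pos_of_pos hbk _).ne'
      have hn2 : b' k ^ a⁻¹ ≠ 0 := (Real.rpow_pos_of_pos hb'k _).ne'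
      field_simp
    have htk0 : 0 < t k := Real.rpow_pos_of_pos (by positivity) _
    have htk1 : t k ≤ 1 := by
      apply Real.rpow_le_one (by positivity) _ ha'.le
      rw [div_le_one (by positivity)]
      linarith
    -- derive contradiction
    have hKr : (0:ℝ) ≤ (K:ℝ) * r k := mul_nonneg K.coe_nonneg hrk.le
    have h1t : 1 - t k < (2 * ((K:ℝ) + 1))⁻¹ := by linarith
    rw [hrt] at hkey
    -- hkey : r k + r k * t k ≤ K * (r k - r k * t k)
    have hKc : (0:ℝ) ≤ (K:ℝ) := K.coe_nonneg
    have e2 : r k * (1 - t k) ≤ r k * (2 * ((K:ℝ) + 1))⁻¹ :=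
      mul_le_mul_of_nonneg_left h1t.le hrk.le
    have e3 : (K:ℝ) * (r k - r k * t k) ≤ (K:ℝ) * (r k * (2 * ((K:ℝ) + 1))⁻¹) := by
      apply mul_le_mul_of_nonneg_left _ hKc
      calc r k - r k * t k = r k * (1 - t k) := by ring
        _ ≤ _ := e2
    have e5 : (K:ℝ) * (2 * ((K:ℝ) + 1))⁻¹ < 1 := by
      rw [← div_eq_mul_inv, div_lt_one hKpos]
      linarith
    have e4 : (K:ℝ) * (r k * (2 * ((K:ℝ) + 1))⁻¹) < r k := by
      calc (K:ℝ) * (r k * (2 * ((K:ℝ) + 1))⁻¹)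
          = r k * ((K:ℝ) * (2 * ((K:ℝ) + 1))⁻¹) := by ring
        _ < r k * 1 := mul_lt_mul_of_pos_left e5 hrk
        _ = r k := mul_one _
    have e6 : 0 ≤ r k * t k := mul_nonneg hrk.le htk0.le
    linarith
end
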